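/- arXiv:1804.07904 — 4 statements merged into one kernel-verified Lean document; each statement's English description precedes it below -/
import Mathlib

section
/- Let φ be a Drinfeld A-module of rank r over F_p = A/p, and let E = End_{F_p}(φ) be the centralizer of φ(A) in F_p{τ}. Let n ∈ A be nonzero and coprime to p. An endomorphism w ∈ E acts as zero on the n-torsion φ[n] if and only if w ∈ n·E, i.e., w = v·φ_n for some v ∈ E. -/
open Polynomial

/-- Twisted polynomial multiplication on `L{τ}` (`τ·c = c^q·τ`), modelled on `Polynomial L`. -/
noncomputable def tmul {L : Type*} [CommSemiring L] (q : ℕ) (f g : Polynomial L) : Polynomial L :=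
  f.sum fun i a => g.sum fun j b => Polynomial.monomial (i + j) (a * b ^ q ^ i)

/-- Evaluation of a twisted polynomial `Σ aᵢ τ^i ∈ L{τ}` at a point `x` of an `L`-algebra `M`,
namely `Σ aᵢ x^{q^i}`. -/
noncomputable def teval {L M : Type*} [CommSemiring L] [CommSemiring M] [Algebra L M]
    (q : ℕ) (f : Polynomial L) (x : M) : M :=
  f.sum fun i a => algebraMap L M a * x ^ q ^ i

/-! Right division by `φ_n` in `F_p{τ}` writes `w = v φ_n + r` with `deg r < deg φ_n`, and `r`
still kills `φ[n]`. The additive polynomial of `φ_n` has derivative the nonzero constant `γ(n)`, so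
it is separable and `φ[n]` has `q ^ deg φ_n` elements, more than the degree `q ^ deg r` of the
additive polynomial of `r`; hence `r = 0`. Cancelling `φ_n` on the right (`F_p{τ}` has no zero
divisors) shows that `v` commutes with `φ(A)`. -/

section Frobenius

variable {L : Type*} [CommRing L] {q : ℕ}

theorem add_pow_pow_of_add_pow (hq : ∀ x y : L, (x + y) ^ q = x ^ q + y ^ q) (i : ℕ) (x y : L) :
    (x + y) ^ q ^ i = x ^ q ^ i + y ^ q ^ i := by
  induction i with
  | zero => simp
  | succ i ih => rw [pow_succ, pow_mul, ih, hq, ← pow_mul, ← pow_mul]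

theorem zero_pow_pow_of_add_pow (hq : ∀ x y : L, (x + y) ^ q = x ^ q + y ^ q) (i : ℕ) :
    (0 : L) ^ q ^ i = 0 := by
  simpa using add_pow_pow_of_add_pow hq i 0 0

end Frobenius

section TwistedRing

variable {L : Type*} [CommRing L] {q : ℕ}

@[simp] theorem tmul_zero_left (g : L[X]) : tmul q 0 g = 0 :=
  sum_zero_index _

theorem tmul_monomial_left (i : ℕ) (a : L) (g : L[X]) :
    tmul q (monomial i a) g = g.sum fun j b => monomial (i + j) (a * b ^ q ^ i) :=
  sum_monomial_index a _ (by simp [Polynomial.sum])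

theorem tmul_add_left (f f' g : L[X]) : tmul q (f + f') g = tmul q f g + tmul q f' g := by
  refine sum_add_index _ _ _ (fun i => by simp [Polynomial.sum]) fun i a a' => ?_
  simp only [add_mul, map_add, Polynomial.sum_add]

theorem tmul_sub_left (f f' g : L[X]) : tmul q (f - f') g = tmul q f g - tmul q f' g := by
  rw [eq_sub_iff_add_eq, ← tmul_add_left, sub_add_cancel]

variable (hq : ∀ x y : L, (x + y) ^ q = x ^ q + y ^ q)
include hq

theorem tmul_monomial_monomial (i j : ℕ) (a b : L) :
    tmul q (monomial i a) (monomial j b) = monomial (i + j) (a * b ^ q ^ i) := by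
  rw [tmul_monomial_left]
  exact sum_monomial_index b _ (by simp [zero_pow_pow_of_add_pow hq])

theorem tmul_add_right (f g g' : L[X]) : tmul q f (g + g') = tmul q f g + tmul q f g' := by
  rw [tmul, tmul, tmul, ← Polynomial.sum_add]
  congr 1; funext i a
  exact sum_add_index _ _ _ (fun j => by simp [zero_pow_pow_of_add_pow hq])
    fun j b b' => by rw [add_pow_pow_of_add_pow hq, mul_add, map_add]

theorem tmul_assoc (f g h : L[X]) : tmul q (tmul q f g) h = tmul q f (tmul q g h) := by
  induction f using Polynomial.induction_on' with
  | add f f' ihf ihf' => rw [tmul_add_left, tmul_add_left, tmul_add_left, ihf, ihf']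
  | monomial i a =>
  induction g using Polynomial.induction_on' with
  | add g g' ihg ihg' =>
    simp only [tmul_add_right hq, tmul_add_left, ihg, ihg']
  | monomial j b =>
  induction h using Polynomial.induction_on' with
  | add h h' ihh ihh' => simp only [tmul_add_right hq, ihh, ihh']
  | monomial k c =>
    simp only [tmul_monomial_monomial hq, add_assoc, mul_pow, ← pow_mul, pow_add, mul_assoc,
      mul_comm (q ^ j)]

end TwistedRing

section TwistedDegree

variable {L : Type*} [CommRing L] {q : ℕ}

theorem natDegree_tmul_le (f g : L[X]) :
    (tmul q f g).natDegree ≤ f.natDegree + g.natDegree := by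
  refine natDegree_sum_le_of_forall_le _ _ fun i hi =>
    natDegree_sum_le_of_forall_le _ _ fun j hj => ?_
  have := le_natDegree_of_mem_supp i hi
  have := le_natDegree_of_mem_supp j hj
  exact (natDegree_monomial_le _).trans (by omega)

variable (hq : ∀ x y : L, (x + y) ^ q = x ^ q + y ^ q)
include hq

theorem coeff_tmul_natDegree_add (f g : L[X]) :
    (tmul q f g).coeff (f.natDegree + g.natDegree) =
      f.leadingCoeff * g.leadingCoeff ^ q ^ f.natDegree := by
  classical
  simp only [tmul, Polynomial.sum_def, finsetSum_coeff, coeff_monomial]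
  rw [Finset.sum_eq_single f.natDegree, Finset.sum_eq_single g.natDegree, if_pos rfl]
  · rfl
  · intro j hj hne
    have := le_natDegree_of_mem_supp j hj
    exact if_neg (by omega)
  · intro hg
    rw [notMem_support_iff.1 hg, zero_pow_pow_of_add_pow hq, mul_zero, ite_self]
  · intro i hi hne
    have := le_natDegree_of_mem_supp i hi
    refine Finset.sum_eq_zero fun j hj => if_neg ?_
    have := le_natDegree_of_mem_supp j hj
    omega
  · intro hf
    simp [notMem_support_iff.1 hf]

variable [IsDomain L]

theorem natDegree_tmul {f g : L[X]} (hf : f ≠ 0) (hg : g ≠ 0) :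
    (tmul q f g).natDegree = f.natDegree + g.natDegree :=
  (natDegree_tmul_le f g).antisymm <| le_natDegree_of_ne_zero <| by
    rw [coeff_tmul_natDegree_add hq]; simp [hf, hg]

theorem tmul_ne_zero {f g : L[X]} (hf : f ≠ 0) (hg : g ≠ 0) : tmul q f g ≠ 0 := fun h => by
  simpa [h, hf, hg] using coeff_tmul_natDegree_add hq f g

theorem tmul_right_cancel {f f' g : L[X]} (hg : g ≠ 0) (h : tmul q f g = tmul q f' g) :
    f = f' := by
  by_contra hne
  exact tmul_ne_zero hq (sub_ne_zero.2 hne) hg (by rw [tmul_sub_left, h, sub_self])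

theorem tmul_comm_of_tmul_comm {v g h : L[X]} (hg : g ≠ 0) (hgh : tmul q g h = tmul q h g)
    (hvgh : tmul q (tmul q v g) h = tmul q h (tmul q v g)) : tmul q v h = tmul q h v := by
  refine tmul_right_cancel hq hg ?_
  rw [tmul_assoc hq, ← hgh, ← tmul_assoc hq, hvgh, tmul_assoc hq]

end TwistedDegree

section RightDivision

variable {K : Type*} [Field K] {q : ℕ} (hq : ∀ x y : K, (x + y) ^ q = x ^ q + y ^ q)
include hq

theorem exists_degree_sub_tmul_lt {g w : K[X]} (hg : g ≠ 0) (hgw : g.degree ≤ w.degree) :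
    ∃ t, (w - tmul q t g).degree < w.degree := by
  have hw : w ≠ 0 := by rintro rfl; simp_all
  have hk : g.natDegree ≤ w.natDegree := natDegree_le_natDegree hgw
  set k := w.natDegree - g.natDegree
  set c := w.leadingCoeff / g.leadingCoeff ^ q ^ k
  have hc : c ≠ 0 := by simp [c, hw, hg]
  have hdeg : (tmul q (monomial k c) g).natDegree = w.natDegree := by
    rw [natDegree_tmul hq (by simpa) hg, natDegree_monomial_eq k hc]; omega
  have htop := coeff_tmul_natDegree_add hq (monomial k c) g
  rw [natDegree_monomial_eq k hc, leadingCoeff_monomial, Nat.sub_add_cancel hk] at htop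
  refine ⟨monomial k c, degree_sub_lt_left ?_ hw ?_⟩
  · rw [degree_eq_natDegree hw, degree_eq_natDegree (tmul_ne_zero hq (by simpa) hg), hdeg]
  · rw [leadingCoeff, leadingCoeff, hdeg, htop]
    simp [c, hg]

theorem exists_eq_tmul_add_of_degree_lt {g : K[X]} (hg : g ≠ 0) (w : K[X]) :
    ∃ v r, w = tmul q v g + r ∧ r.degree < g.degree := by
  induction w using (InvImage.wf degree wellFounded_lt).induction with
  | _ w ih =>
  by_cases hlt : w.degree < g.degree
  · exact ⟨0, w, by simp, hlt⟩
  obtain ⟨t, ht⟩ := exists_degree_sub_tmul_lt hq hg (not_lt.1 hlt)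
  obtain ⟨v, r, hv, hr⟩ := ih _ ht
  exact ⟨t + v, r, by rw [tmul_add_left, add_assoc, ← hv, add_sub_cancel], hr⟩

end RightDivision

section Evaluation

variable {K M : Type*} [CommRing K] [CommRing M] [Algebra K M] {q : ℕ}

theorem teval_add_left (f f' : K[X]) (x : M) :
    teval q (f + f') x = teval q f x + teval q f' x :=
  sum_add_index _ _ _ (fun i => by simp) fun i a a' => by rw [map_add, add_mul]

theorem teval_monomial_left (i : ℕ) (a : K) (x : M) :
    teval q (monomial i a) x = algebraMap K M a * x ^ q ^ i :=
  sum_monomial_index a _ (by simp)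

theorem teval_zero_right (hqM : ∀ x y : M, (x + y) ^ q = x ^ q + y ^ q) (f : K[X]) :
    teval q f (0 : M) = 0 :=
  Finset.sum_eq_zero fun i _ => by simp only [zero_pow_pow_of_add_pow hqM, mul_zero]

theorem teval_tmul (hqK : ∀ x y : K, (x + y) ^ q = x ^ q + y ^ q)
    (hqM : ∀ x y : M, (x + y) ^ q = x ^ q + y ^ q) (f g : K[X]) (x : M) :
    teval q (tmul q f g) x = teval q f (teval q g x) := by
  induction f using Polynomial.induction_on' with
  | add f f' ihf ihf' => rw [tmul_add_left, teval_add_left, teval_add_left, ihf, ihf']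
  | monomial i a =>
  induction g using Polynomial.induction_on' with
  | add g g' ihg ihg' =>
    rw [tmul_add_right hqK, teval_add_left, ihg, ihg', teval_add_left, teval_monomial_left,
      teval_monomial_left, teval_monomial_left, add_pow_pow_of_add_pow hqM, mul_add]
  | monomial j b =>
    simp only [tmul_monomial_monomial hqK, teval_monomial_left, map_mul, map_pow, mul_pow,
      ← pow_mul, pow_add, mul_comm (q ^ j), mul_assoc]

noncomputable def addPoly (q : ℕ) (f : K[X]) : K[X] :=
  f.sum fun i a => C a * X ^ q ^ i

theorem teval_eq_aeval_addPoly (f : K[X]) (x : M) : teval q f x = aeval x (addPoly q f) := by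
  simp only [teval, addPoly, Polynomial.sum_def, map_sum, map_mul, aeval_C, map_pow, aeval_X]

theorem coeff_addPoly_pow (hq2 : 2 ≤ q) (f : K[X]) (i : ℕ) :
    (addPoly q f).coeff (q ^ i) = f.coeff i := by
  classical
  simp only [addPoly, Polynomial.sum_def, finsetSum_coeff, coeff_C_mul_X_pow,
    (Nat.pow_right_injective hq2).eq_iff]
  rw [Finset.sum_ite_eq]
  split_ifs with h
  · rfl
  · exact (notMem_support_iff.1 h).symm

theorem natDegree_addPoly_le (hq0 : 0 < q) (f : K[X]) :
    (addPoly q f).natDegree ≤ q ^ f.natDegree :=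
  natDegree_sum_le_of_forall_le _ _ fun i hi => (natDegree_C_mul_X_pow_le _ _).trans <|
    Nat.pow_le_pow_right hq0 (le_natDegree_of_mem_supp i hi)

theorem natDegree_addPoly (hq2 : 2 ≤ q) {f : K[X]} (hf : f ≠ 0) :
    (addPoly q f).natDegree = q ^ f.natDegree :=
  (natDegree_addPoly_le (by omega) f).antisymm <| le_natDegree_of_ne_zero <| by
    rw [coeff_addPoly_pow hq2]; exact leadingCoeff_ne_zero.2 hf

theorem addPoly_eq_zero_iff (hq2 : 2 ≤ q) {f : K[X]} : addPoly q f = 0 ↔ f = 0 := by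
  refine ⟨fun h => ext fun i => by rw [← coeff_addPoly_pow hq2, h, coeff_zero, coeff_zero], ?_⟩
  rintro rfl
  exact sum_zero_index _

theorem derivative_addPoly (hchar : (q : K) = 0) (f : K[X]) :
    derivative (addPoly q f) = C (f.coeff 0) := by
  classical
  rw [addPoly, Polynomial.sum_def, derivative_sum, Finset.sum_eq_single 0]
  · simp
  · intro i _ hi
    rw [derivative_C_mul_X_pow, Nat.cast_pow, hchar, zero_pow hi, mul_zero, C_0, zero_mul]
  · intro h
    simp [notMem_support_iff.1 h]

end Evaluation

section Torsion

variable {K Ω : Type*} [Field K] [Field Ω] [Algebra K Ω] {q : ℕ}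

theorem separable_addPoly (hchar : (q : K) = 0) {g : K[X]} (hg : g.coeff 0 ≠ 0) :
    (addPoly q g).Separable := by
  rw [separable_def, derivative_addPoly hchar]
  exact ⟨0, C (g.coeff 0)⁻¹, by rw [zero_mul, zero_add, ← C_mul, inv_mul_cancel₀ hg, C_1]⟩

theorem eq_zero_of_degree_lt_of_teval_eq_zero [IsAlgClosed Ω] (hq2 : 2 ≤ q) (hchar : (q : K) = 0)
    {f g : K[X]} (hg : g.coeff 0 ≠ 0) (hfg : f.degree < g.degree)
    (h : ∀ x : Ω, teval q g x = 0 → teval q f x = 0) : f = 0 := by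
  by_contra hf
  have hg0 : g ≠ 0 := by rintro rfl; simp at hg
  have hroots : Fintype.card ((addPoly q g).rootSet Ω) = q ^ g.natDegree := by
    rw [card_rootSet_eq_natDegree (separable_addPoly hchar hg) (IsAlgClosed.splits _),
      natDegree_addPoly hq2 hg0]
  have hdeg : (addPoly q f).natDegree < q ^ g.natDegree :=
    (natDegree_addPoly_le (by omega) f).trans_lt
      (Nat.pow_lt_pow_right hq2 (natDegree_lt_natDegree hf hfg))
  refine hf <| (addPoly_eq_zero_iff hq2).1 <| map_injective _ (algebraMap K Ω).injective <|
    (eq_zero_of_natDegree_lt_card_of_eval_eq_zero _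
      (Subtype.val_injective (p := (· ∈ (addPoly q g).rootSet Ω))) ?_ ?_).trans
      (Polynomial.map_zero _).symm
  · rintro ⟨x, hx⟩
    rw [eval_map_algebraMap, ← teval_eq_aeval_addPoly]
    exact h x (by rw [teval_eq_aeval_addPoly]; exact (mem_rootSet.1 hx).2)
  · rwa [natDegree_map, hroots]

end Torsion

theorem stmt5_general (Fq : Type*) [Field Fq] [Fintype Fq]
    (p : Polynomial Fq) [hmax : (Ideal.span {p}).IsMaximal]
    (Ω : Type*) [Field Ω] [Algebra (Polynomial Fq ⧸ Ideal.span {p}) Ω]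
    [IsAlgClosed Ω]
    (φ : Polynomial Fq → Polynomial (Polynomial Fq ⧸ Ideal.span {p}))
    (hmul : ∀ a b, φ (a * b) = tmul (Fintype.card Fq) (φ a) (φ b))
    (hconst : ∀ a : Polynomial Fq, (φ a).coeff 0 = Ideal.Quotient.mk (Ideal.span {p}) a)
    (n : Polynomial Fq) (hcop : IsCoprime n p)
    (w : Polynomial (Polynomial Fq ⧸ Ideal.span {p}))
    (hw : ∀ a : Polynomial Fq,
      tmul (Fintype.card Fq) w (φ a) = tmul (Fintype.card Fq) (φ a) w) :
    (∀ x : Ω,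
        teval (Fintype.card Fq) (φ n) x = 0 → teval (Fintype.card Fq) w x = 0) ↔
      ∃ v : Polynomial (Polynomial Fq ⧸ Ideal.span {p}),
        (∀ a : Polynomial Fq,
          tmul (Fintype.card Fq) v (φ a) = tmul (Fintype.card Fq) (φ a) v) ∧
        w = tmul (Fintype.card Fq) v (φ n) := by
  set K := Polynomial Fq ⧸ Ideal.span {p}
  let : Field K := Ideal.Quotient.field _
  let : Algebra Fq Ω := ((algebraMap K Ω).comp (algebraMap Fq K)).toAlgebra
  have hqK (x y : K) := map_add (FiniteField.frobeniusAlgHom Fq K) x y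
  have hqΩ (x y : Ω) := map_add (FiniteField.frobeniusAlgHom Fq Ω) x y
  simp only [FiniteField.frobeniusAlgHom_apply] at hqK hqΩ
  have hφn : (φ n).coeff 0 ≠ 0 := by
    rw [hconst, Ne, Ideal.Quotient.eq_zero_iff_dvd]
    exact fun hpn =>
      hmax.ne_top (Ideal.span_singleton_eq_top.2 (hcop.isUnit_of_dvd' hpn dvd_rfl))
  have hφn0 : φ n ≠ 0 := fun h => hφn (by rw [h, coeff_zero])
  constructor
  · intro hvanish
    obtain ⟨v, r, rfl, hr⟩ := exists_eq_tmul_add_of_degree_lt hqK hφn0 w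
    have hr0 : r = 0 := eq_zero_of_degree_lt_of_teval_eq_zero (Ω := Ω) Fintype.one_lt_card
      (by rw [← map_natCast (algebraMap Fq K), FiniteField.cast_card_eq_zero, map_zero]) hφn hr
      fun x hx => by
        simpa [teval_add_left, teval_tmul hqK hqΩ, hx, teval_zero_right hqΩ] using hvanish x hx
    subst hr0
    rw [add_zero] at hw ⊢
    refine ⟨v, fun a => tmul_comm_of_tmul_comm hqK hφn0 ?_ (hw a), rfl⟩
    rw [← hmul, mul_comm, hmul]
  · rintro ⟨v, -, rfl⟩ x hx
    rw [teval_tmul hqK hqΩ, hx, teval_zero_right hqΩ]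

/-- Let `φ` be a Drinfeld `A`-module of rank `r` over `F_p = A/p` and
`E = End_{F_p}(φ)` the centralizer of `φ(A)` in `F_p{τ}`.  For `n ∈ A` nonzero and coprime
to `p`, an endomorphism `w ∈ E` acts as zero on the `n`-torsion `φ[n]` (the zeros of
`φ_n(x)` in an algebraic closure `Ω` of `F_p`) if and only if `w = v·φ_n` for some `v ∈ E`. -/
theorem stmt5 (Fq : Type*) [Field Fq] [Fintype Fq]
    (p : Polynomial Fq) (hp : Irreducible p) [hmax : (Ideal.span {p}).IsMaximal]
    (Ω : Type*) [Field Ω] [Algebra (Polynomial Fq ⧸ Ideal.span {p}) Ω]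
    [IsAlgClosed Ω] [Algebra.IsAlgebraic (Polynomial Fq ⧸ Ideal.span {p}) Ω]
    (r : ℕ) (hr : 1 ≤ r)
    (φ : Polynomial Fq → Polynomial (Polynomial Fq ⧸ Ideal.span {p}))
    (hadd : ∀ a b, φ (a + b) = φ a + φ b)
    (hmul : ∀ a b, φ (a * b) = tmul (Fintype.card Fq) (φ a) (φ b))
    (hone : φ 1 = 1)
    (hrank : ∀ a : Polynomial Fq, a ≠ 0 → (φ a).natDegree = r * a.natDegree)
    (hconst : ∀ a : Polynomial Fq, (φ a).coeff 0 = Ideal.Quotient.mk (Ideal.span {p}) a)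
    (n : Polynomial Fq) (hn : n ≠ 0) (hcop : IsCoprime n p)
    (w : Polynomial (Polynomial Fq ⧸ Ideal.span {p}))
    (hw : ∀ a : Polynomial Fq,
      tmul (Fintype.card Fq) w (φ a) = tmul (Fintype.card Fq) (φ a) w) :
    (∀ x : Ω,
        teval (Fintype.card Fq) (φ n) x = 0 → teval (Fintype.card Fq) w x = 0) ↔
      ∃ v : Polynomial (Polynomial Fq ⧸ Ideal.span {p}),
        (∀ a : Polynomial Fq,
          tmul (Fintype.card Fq) v (φ a) = tmul (Fintype.card Fq) (φ a) v) ∧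
        w = tmul (Fintype.card Fq) v (φ n) :=
  stmt5_general Fq p (hmax := hmax) Ω φ hmul hconst n hcop w hw
end

section
/- Let K be a field, V an r-dimensional K-vector space, t ∈ End_K(V) a diagonalizable endomorphism with r distinct eigenvalues in K, and g ∈ Aut_K(V). Then the differential of the map Ψ: Aut_K(V) × Z(t) → End_K(V), (g, w) ↦ g w g^{-1}, at the point (g, t), namely the linear map (M, N) ↦ gNg^{-1} + Mtg^{-1} − gtg^{-1}Mg^{-1} from End_K(V) × Z(t) to End_K(V), is surjective. -/
/-!
Conjugating by `g` reduces the claim to writing every endomorphism as `N + M t - t M` with `N`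
commuting with `t`. In the eigenbasis of `t`, the commutator `M t - t M` has entries
`M i j * (μ j - μ i)`, so it realizes every matrix with zero diagonal, while diagonal matrices
commute with `t`.
-/

open Matrix in
theorem Matrix.exists_diagonal_add_mul_diagonal_sub_diagonal_mul_eq {n K : Type*} [Fintype n]
    [DecidableEq n] [Field K] {μ : n → K} (hμ : Function.Injective μ) (Y : Matrix n n K) :
    ∃ d : n → K, ∃ M : Matrix n n K, diagonal d + M * diagonal μ - diagonal μ * M = Y := by
  refine ⟨Y.diag, of fun i j => Y i j / (μ j - μ i), ?_⟩
  ext i j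
  rcases eq_or_ne i j with rfl | hij
  · simp
  · have hμij : μ j - μ i ≠ 0 := sub_ne_zero.mpr (hμ.ne hij.symm)
    simp only [sub_apply, add_apply, mul_diagonal, diagonal_mul, diagonal_apply_ne _ hij, of_apply]
    field_simp
    ring

theorem Module.Basis.toLinAlgEquiv_diagonal {ι K V : Type*} [Fintype ι] [DecidableEq ι] [CommRing K]
    [AddCommGroup V] [Module K V] (b : Module.Basis ι K V) {t : Module.End K V} {μ : ι → K}
    (ht : ∀ i, t (b i) = μ i • b i) : Matrix.toLinAlgEquiv b (Matrix.diagonal μ) = t :=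
  b.ext fun i => by simp [Matrix.toLinAlgEquiv_self, Matrix.diagonal_apply, ht]

theorem Module.End.exists_mem_centralizer_add_mul_sub_mul_eq {ι K V : Type*} [Fintype ι]
    [DecidableEq ι] [Field K] [AddCommGroup V] [Module K V] (b : Module.Basis ι K V)
    {t : Module.End K V} {μ : ι → K} (hμ : Function.Injective μ) (ht : ∀ i, t (b i) = μ i • b i)
    (Y : Module.End K V) :
    ∃ N ∈ Subalgebra.centralizer K {t}, ∃ M, N + M * t - t * M = Y := by
  set φ := Matrix.toLinAlgEquiv b
  obtain ⟨d, M, hY⟩ :=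
    Matrix.exists_diagonal_add_mul_diagonal_sub_diagonal_mul_eq hμ (φ.symm Y)
  have hφ : φ (Matrix.diagonal μ) = t := b.toLinAlgEquiv_diagonal ht
  refine ⟨φ (Matrix.diagonal d), ?_, φ M, ?_⟩
  · rw [Subalgebra.mem_centralizer_iff]
    rintro _ rfl
    rw [← hφ, ← map_mul, ← map_mul, Matrix.diagonal_mul_diagonal, Matrix.diagonal_mul_diagonal]
    simp only [mul_comm]
  · rw [← hφ, ← map_mul, ← map_mul, ← map_add, ← map_sub, hY, φ.apply_symm_apply]

theorem Units.exists_conj_add_mul_mul_inv_sub_eq {A : Type*} [Ring A] {t : A} {S : Set A}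
    (g : Aˣ) (h : ∀ Y, ∃ N ∈ S, ∃ M, N + M * t - t * M = Y) (X : A) :
    ∃ M, ∃ N ∈ S, g * N * ↑g⁻¹ + M * t * ↑g⁻¹ - g * t * ↑g⁻¹ * M * ↑g⁻¹ = X := by
  obtain ⟨N, hN, M, hY⟩ := h (↑g⁻¹ * X * g)
  refine ⟨g * M, N, hN, ?_⟩
  calc _ = g * (N + M * t - t * M) * ↑g⁻¹ := by
        simp only [mul_add, mul_sub, add_mul, sub_mul, mul_assoc, Units.inv_mul_cancel_left]
    _ = X := by simp [hY, mul_assoc]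

/-- Let `K` be a field, `V` an `r`-dimensional `K`-vector space,
`t ∈ End_K(V)` diagonalizable with `r` distinct eigenvalues and `g ∈ Aut_K(V)`.
Then the differential of `Ψ : (g, w) ↦ g w g⁻¹` at `(g, t)`, i.e. the map
`(M, N) ↦ gNg⁻¹ + Mtg⁻¹ − gtg⁻¹Mg⁻¹` from `End_K(V) × Z(t)` to `End_K(V)`, is surjective. -/
theorem stmt9 (K V : Type*) [Field K] [AddCommGroup V] [Module K V]
    (r : ℕ) (b : Module.Basis (Fin r) K V)
    (t : Module.End K V) (μ : Fin r → K) (hμ : Function.Injective μ)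
    (ht : ∀ i, t (b i) = μ i • b i)
    (g : (Module.End K V)ˣ) :
    Function.Surjective
      (fun P : Module.End K V ×
          (Subalgebra.centralizer K ({t} : Set (Module.End K V))) =>
        (g : Module.End K V) * (P.2 : Module.End K V) * (↑g⁻¹ : Module.End K V) +
          P.1 * t * (↑g⁻¹ : Module.End K V) -
          (g : Module.End K V) * t * (↑g⁻¹ : Module.End K V) * P.1 *
            (↑g⁻¹ : Module.End K V)) := by
  intro X
  obtain ⟨M, N, hN, hX⟩ :=
    g.exists_conj_add_mul_mul_inv_sub_eq
      (Module.End.exists_mem_centralizer_add_mul_sub_mul_eq b hμ ht) X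
  exact ⟨(M, ⟨N, hN⟩), hX⟩
end

section
/- Let A = F_q[T] with q even, F = F_q(T), and let K = F(√g) be an inseparable quadratic extension with g ∈ A not a square. Write g = s² + T·c² with s, c ∈ A (even/odd decomposition). Then A[√g] = A[c·√T], so the integral closure of A in K is A[√T], and the conductor index of A[√g] in A[√T] is generated by c. -/
/-!
In characteristic `2` every `x ∈ K = F(ρ)` has `x² ∈ F`, and every `h ∈ 𝔽_q[T]` is `a² + T b²`
because `𝔽_q` is perfect. If `x` is integral over `A`, then `x²` is integral in `F`, hence lies in
`A` and equals `(a + bθ)²` for some `a, b ∈ A`; injectivity of Frobenius gives `x = a + bθ`.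
Since `θ²` and `(cθ)²` lie in `A`, the rings `A[θ]` and `A[ρ] = A[s + cθ] = A[cθ]` are the free
modules on `1, θ` and `1, cθ`, so the `θ`-coordinate identifies their quotient with `A/(c)`.
-/
open Polynomial Submodule

theorem Algebra.adjoin_singleton_algebraMap_add {R S : Type*} [CommRing R] [CommRing S]
    [Algebra R S] (r : R) (z : S) :
    Algebra.adjoin R {algebraMap R S r + z} = Algebra.adjoin R {z} := by
  apply le_antisymm <;> apply Algebra.adjoin_singleton_le
  · exact add_mem (Subalgebra.algebraMap_mem _ r) (Algebra.self_mem_adjoin_singleton R z)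
  · simpa using sub_mem (Algebra.self_mem_adjoin_singleton R (algebraMap R S r + z))
      (Subalgebra.algebraMap_mem _ r)

theorem Algebra.toSubmodule_adjoin_singleton_eq_span_pair {R S : Type*} [CommRing R]
    [CommRing S] [Algebra R S] {y : S} {a : R} (hy : y ^ 2 = algebraMap R S a) :
    Subalgebra.toSubmodule (Algebra.adjoin R {y}) = span R {1, y} := by
  apply le_antisymm
  · intro x hx
    induction hx using Algebra.adjoin_induction with
    | mem z hz =>
      rw [Set.mem_singleton_iff.mp hz]
      exact subset_span (by simp)
    | algebraMap r =>
      rw [Algebra.algebraMap_eq_smul_one]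
      exact smul_mem _ _ (subset_span (by simp))
    | add x y _ _ hx hy => exact add_mem hx hy
    | mul x z _ _ hx hz =>
      obtain ⟨u, v, rfl⟩ := mem_span_pair.mp hx
      obtain ⟨u', v', rfl⟩ := mem_span_pair.mp hz
      refine mem_span_pair.mpr ⟨u * u' + a * (v * v'), u * v' + v * u', ?_⟩
      simp only [Algebra.smul_def, map_add, map_mul, mul_one, ← hy]
      ring
  · rw [span_le, Set.insert_subset_iff, Set.singleton_subset_iff]
    exact ⟨(Algebra.adjoin R {y}).one_mem, Algebra.self_mem_adjoin_singleton R y⟩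

theorem exists_sq_eq_algebraMap_of_adjoin_eq_top {R S : Type*} [CommRing R] [CommRing S]
    [CharP S 2] [Algebra R S] {ρ : S} {a : R} (hρ : ρ ^ 2 = algebraMap R S a)
    (hgen : Algebra.adjoin R {ρ} = ⊤) (x : S) : ∃ y : R, x ^ 2 = algebraMap R S y := by
  have hx : x ∈ span R {1, ρ} := by
    rw [← Algebra.toSubmodule_adjoin_singleton_eq_span_pair hρ, hgen]
    trivial
  obtain ⟨u, v, rfl⟩ := mem_span_pair.mp hx
  refine ⟨u ^ 2 + v ^ 2 * a, ?_⟩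
  simp only [Algebra.smul_def, mul_one, CharTwo.add_sq, mul_pow, hρ, map_add, map_mul, map_pow]

theorem Polynomial.exists_eq_sq_add_X_mul_sq {R : Type*} [CommRing R] [CharP R 2]
    [PerfectRing R 2] (p : R[X]) : ∃ a b : R[X], p = a ^ 2 + X * b ^ 2 := by
  induction p using Polynomial.induction_on' with
  | add p q hp hq =>
    obtain ⟨a, b, rfl⟩ := hp
    obtain ⟨a', b', rfl⟩ := hq
    exact ⟨a + a', b + b', by rw [CharTwo.add_sq, CharTwo.add_sq]; ring⟩
  | monomial n r =>
    obtain ⟨t, rfl⟩ := surjective_frobenius R 2 r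
    obtain ⟨k, rfl | rfl⟩ := Nat.even_or_odd' n
    · exact ⟨monomial k t, 0, by simp [monomial_pow, frobenius_def]; ring_nf⟩
    · exact ⟨0, monomial k t, by simp [monomial_pow, frobenius_def, X_mul_monomial]; ring_nf⟩

theorem integralClosure_eq_adjoin_of_sq_eq_X {k F K : Type*} [Field k] [CharP k 2]
    [PerfectRing k 2] [Field F] [Algebra k[X] F] [IsFractionRing k[X] F] [Field K] [CharP K 2]
    [Algebra F K] [Algebra k[X] K] [IsScalarTower k[X] F K]
    (hK : ∀ x : K, ∃ y : F, x ^ 2 = algebraMap F K y)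
    {θ : K} (hθ : θ ^ 2 = algebraMap k[X] K X) :
    integralClosure k[X] K = Algebra.adjoin k[X] {θ} := by
  refine le_antisymm (fun x hx ↦ ?_) (adjoin_le_integralClosure ?_)
  · obtain ⟨y, hy⟩ := hK x
    have hyint : IsIntegral k[X] y :=
      (isIntegral_algebraMap_iff (algebraMap F K).injective).mp (hy ▸ hx.pow 2)
    obtain ⟨p, rfl⟩ := IsIntegrallyClosed.isIntegral_iff.mp hyint
    obtain ⟨a, b, rfl⟩ := p.exists_eq_sq_add_X_mul_sq
    have hxab : x = algebraMap k[X] K a + algebraMap k[X] K b * θ := by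
      apply frobenius_inj K 2
      simp only [frobenius_def, hy, hθ, map_add, map_mul, map_pow,
        ← IsScalarTower.algebraMap_apply]
      ring
    rw [hxab]
    exact add_mem (Subalgebra.algebraMap_mem _ a)
      (mul_mem (Subalgebra.algebraMap_mem _ b) (Algebra.self_mem_adjoin_singleton _ θ))
  · exact .of_pow two_pos (hθ ▸ isIntegral_algebraMap)

section SpanPair

variable {R M : Type*} [CommRing R] [AddCommGroup M] [Module R M] {e f : M}

noncomputable def LinearIndependent.basisSpanPair (h : LinearIndependent R ![e, f]) :
    Module.Basis (Fin 2) R (span R {e, f}) :=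
  (Module.Basis.span h).map (LinearEquiv.ofEq _ _ (by rw [Matrix.range_cons_cons_empty]))

theorem LinearIndependent.coe_basisSpanPair_apply (h : LinearIndependent R ![e, f]) (i : Fin 2) :
    (h.basisSpanPair i : M) = ![e, f] i := by
  simp [LinearIndependent.basisSpanPair, Module.Basis.span_apply]

theorem LinearIndependent.coe_eq_repr_smul_add_repr_smul (h : LinearIndependent R ![e, f])
    (x : span R {e, f}) :
    (x : M) = h.basisSpanPair.repr x 0 • e + h.basisSpanPair.repr x 1 • f := by
  have hx := congrArg Subtype.val (h.basisSpanPair.sum_repr x)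
  rw [Fin.sum_univ_two] at hx
  simp only [Submodule.coe_add, Submodule.coe_smul, h.coe_basisSpanPair_apply] at hx
  simpa using hx.symm

theorem LinearIndependent.mem_span_pair_smul_iff (h : LinearIndependent R ![e, f]) (c : R)
    (x : span R {e, f}) :
    (x : M) ∈ span R {e, c • f} ↔ c ∣ h.basisSpanPair.repr x 1 := by
  set b := h.basisSpanPair
  constructor
  · intro hx
    obtain ⟨u, w, hx⟩ := mem_span_pair.mp hx
    have hx' : x = u • b 0 + (w * c) • b 1 := by
      ext
      simp [b, h.coe_basisSpanPair_apply, ← hx, mul_smul]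
    exact ⟨w, by simp [hx', mul_comm]⟩
  · rintro ⟨w, hw⟩
    refine mem_span_pair.mpr ⟨b.repr x 0, w, ?_⟩
    rw [h.coe_eq_repr_smul_add_repr_smul x, hw, smul_smul, mul_comm]

noncomputable def LinearIndependent.quotientSpanPairEquiv (h : LinearIndependent R ![e, f])
    (c : R) :
    (span R {e, f} ⧸ (span R {e, c • f}).comap (span R {e, f}).subtype) ≃ₗ[R]
      R ⧸ Ideal.span {c} :=
  let φ := (Ideal.span {c}).mkQ ∘ₗ h.basisSpanPair.coord 1
  have hker : LinearMap.ker φ = (span R {e, c • f}).comap (span R {e, f}).subtype := by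
    ext x
    simp [φ, h.mem_span_pair_smul_iff, Ideal.Quotient.eq_zero_iff_mem, Ideal.mem_span_singleton]
  have hsurj : Function.Surjective φ := fun r ↦ by
    obtain ⟨r, rfl⟩ := Submodule.Quotient.mk_surjective _ r
    exact ⟨r • h.basisSpanPair 1, by simp [φ, Algebra.smul_def]⟩
  (quotEquivOfEq _ _ hker.symm).trans (φ.quotKerEquivOfSurjective hsurj)

end SpanPair

theorem stmt13_general (Fq : Type*) [Field Fq] [Fintype Fq] [CharP Fq 2]
    (g s c : Polynomial Fq)
    (K : Type*) [Field K] [Algebra (RatFunc Fq) K] [Algebra (Polynomial Fq) K]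
    [IsScalarTower (Polynomial Fq) (RatFunc Fq) K]
    (hdim : Module.finrank (RatFunc Fq) K = 2)
    (ρ θ : K)
    (hρ : ρ ^ 2 = algebraMap (Polynomial Fq) K g)
    (hθ : θ ^ 2 = algebraMap (Polynomial Fq) K Polynomial.X)
    (hrel : ρ = algebraMap (Polynomial Fq) K s + algebraMap (Polynomial Fq) K c * θ)
    (hgen : Algebra.adjoin (RatFunc Fq) ({ρ} : Set K) = ⊤) :
    Algebra.adjoin (Polynomial Fq) ({ρ} : Set K) =
      Algebra.adjoin (Polynomial Fq) ({algebraMap (Polynomial Fq) K c * θ} : Set K) ∧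
    integralClosure (Polynomial Fq) K = Algebra.adjoin (Polynomial Fq) ({θ} : Set K) ∧
    Nonempty
      (((Subalgebra.toSubmodule (Algebra.adjoin (Polynomial Fq) ({θ} : Set K)) :
            Submodule (Polynomial Fq) K) ⧸
          (Subalgebra.toSubmodule
            (Algebra.adjoin (Polynomial Fq) ({ρ} : Set K))).comap
            (Subalgebra.toSubmodule (Algebra.adjoin (Polynomial Fq) ({θ} : Set K))).subtype)
        ≃ₗ[Polynomial Fq] (Polynomial Fq ⧸ Ideal.span {c})) := by
  have : CharP K 2 := charP_of_injective_ringHom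
    ((algebraMap (Polynomial Fq) K).comp C).injective 2
  have hρF := IsScalarTower.algebraMap_apply (Polynomial Fq) (RatFunc Fq) K g ▸ hρ
  have hθF := IsScalarTower.algebraMap_apply (Polynomial Fq) (RatFunc Fq) K X ▸ hθ
  have hρθ : Algebra.adjoin (Polynomial Fq) {ρ} =
      Algebra.adjoin (Polynomial Fq) {algebraMap (Polynomial Fq) K c * θ} := by
    rw [hrel, Algebra.adjoin_singleton_algebraMap_add]
  have hspan : ⊤ ≤ span (RatFunc Fq) (Set.range ![1, θ]) := by
    rw [Matrix.range_cons_cons_empty, ← Algebra.toSubmodule_adjoin_singleton_eq_span_pair hθF,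
      top_le_iff, Algebra.toSubmodule_eq_top, eq_top_iff, ← hgen]
    refine Algebra.adjoin_singleton_le ?_
    rw [hrel, IsScalarTower.algebraMap_apply _ (RatFunc Fq) K s,
      IsScalarTower.algebraMap_apply _ (RatFunc Fq) K c]
    exact add_mem (Subalgebra.algebraMap_mem _ _)
      (mul_mem (Subalgebra.algebraMap_mem _ _) (Algebra.self_mem_adjoin_singleton _ θ))
  have hli : LinearIndependent (Polynomial Fq) ![1, θ] :=
    (linearIndependent_of_top_le_span_of_card_eq_finrank hspan (by simp [hdim])).restrict_scalars' _
  refine ⟨hρθ, integralClosure_eq_adjoin_of_sq_eq_X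
    (exists_sq_eq_algebraMap_of_adjoin_eq_top hρF hgen) hθ, ?_⟩
  have hcθ : (c • θ) ^ 2 = algebraMap (Polynomial Fq) K (X * c ^ 2) := by
    rw [_root_.smul_pow, hθ, Algebra.smul_def, ← map_mul, mul_comm]
  rw [hρθ, ← Algebra.smul_def, Algebra.toSubmodule_adjoin_singleton_eq_span_pair hθ,
    Algebra.toSubmodule_adjoin_singleton_eq_span_pair hcθ]
  exact ⟨hli.quotientSpanPairEquiv c⟩

/-- Let `A = F_q[T]` with `q` even, `F = F_q(T)`, and `K = F(√g)` an
inseparable quadratic extension with `g ∈ A` not a square.  Write `g = s² + T·c²`.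
Then `A[√g] = A[c·√T]`, the integral closure of `A` in `K` is `A[√T]`, and the index of
`A[√g]` in `A[√T]` is generated by `c` (i.e. `A[√T]/A[√g] ≅ A/(c)` as `A`-modules). -/
theorem stmt13 (Fq : Type*) [Field Fq] [Fintype Fq] [CharP Fq 2]
    (g s c : Polynomial Fq) (hns : ¬ IsSquare g)
    (hdecomp : g = s ^ 2 + Polynomial.X * c ^ 2)
    (K : Type*) [Field K] [Algebra (RatFunc Fq) K] [Algebra (Polynomial Fq) K]
    [IsScalarTower (Polynomial Fq) (RatFunc Fq) K]
    (hdim : Module.finrank (RatFunc Fq) K = 2)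
    (ρ θ : K)
    (hρ : ρ ^ 2 = algebraMap (Polynomial Fq) K g)
    (hθ : θ ^ 2 = algebraMap (Polynomial Fq) K Polynomial.X)
    (hrel : ρ = algebraMap (Polynomial Fq) K s + algebraMap (Polynomial Fq) K c * θ)
    (hgen : Algebra.adjoin (RatFunc Fq) ({ρ} : Set K) = ⊤) :
    Algebra.adjoin (Polynomial Fq) ({ρ} : Set K) =
      Algebra.adjoin (Polynomial Fq) ({algebraMap (Polynomial Fq) K c * θ} : Set K) ∧
    integralClosure (Polynomial Fq) K = Algebra.adjoin (Polynomial Fq) ({θ} : Set K) ∧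
    Nonempty
      (((Subalgebra.toSubmodule (Algebra.adjoin (Polynomial Fq) ({θ} : Set K)) :
            Submodule (Polynomial Fq) K) ⧸
          (Subalgebra.toSubmodule
            (Algebra.adjoin (Polynomial Fq) ({ρ} : Set K))).comap
            (Subalgebra.toSubmodule (Algebra.adjoin (Polynomial Fq) ({θ} : Set K))).subtype)
        ≃ₗ[Polynomial Fq] (Polynomial Fq ⧸ Ideal.span {c})) :=
  stmt13_general Fq g s c K hdim ρ θ hρ hθ hrel hgen
end

section
/- Let A = F_q[T] with q even, F = F_q(T), and consider the Artin–Schreier quadratic extension K of F defined by X² + X = n/m with n, m ∈ A coprime and m = q₁^{2e₁−1}⋯q_s^{2e_s−1} for distinct primes q_i and e_i ≥ 1. Let D = q₁^{e₁}⋯q_s^{e_s}, let ε ∈ F_q^×, and let α be a root of f(X) = X² + εD·X + ε²q₁⋯q_s·n. Then K = F(α) and the integral closure of A in K is A[α]. -/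
/-!
Put `d = εD` and `N = ε²q₁⋯q_s·n`; since `D² = q₁⋯q_s·m` we have `d²·(n/m) = N`. Hence `d·x` is a
root of `X² + dX + N`, so in characteristic two it is `α` or `α + d`, and `x ∈ F(α)`.

An element `a + bα` with `b ≠ 0` has minimal polynomial `X² + bd·X + (a² + abd + b²N)` over `F`, so
if it is integral over `A` then `c = bd ∈ A` and this norm lies in `A`. Multiplying the norm by
`m²` shows that `ma` is integral, hence in `A`, and that `m²` divides `(ma)² + cm·(ma) + c²nm`.
At each `qᵢ` the two outer terms have valuations of different parity, and the middle one exceeds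
their minimum, so both outer terms are divisible by `qᵢ^(2(2eᵢ-1))`. This gives `m ∣ ma` and
`D ∣ c`, that is `a, b ∈ A`.
-/

open Polynomial

theorem emultiplicity_add_add_eq_min {R : Type*} [Ring R] {p a b c : R}
    (hac : emultiplicity p a ≠ emultiplicity p c)
    (hb : min (emultiplicity p a) (emultiplicity p c) < emultiplicity p b) :
    emultiplicity p (a + b + c) = min (emultiplicity p a) (emultiplicity p c) := by
  rw [← emultiplicity_add_eq_min hac] at hb ⊢
  rw [add_right_comm, add_comm, emultiplicity_add_of_gt hb]

theorem pow_dvd_and_pow_dvd_of_sq_add_mul_add_eq {R : Type*} [CommRing R] [IsDomain R]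
    {p b c m n t : R} {e : ℕ} (hp : Prime p) (hpn : ¬ p ∣ n) (he : 1 ≤ e)
    (hm : emultiplicity p m = (2 * e - 1 : ℕ))
    (h : b ^ 2 + c * m * b + c ^ 2 * n * m = m ^ 2 * t) :
    p ^ (2 * e - 1) ∣ b ∧ p ^ e ∣ c := by
  have hb2 : emultiplicity p (b ^ 2) = 2 * emultiplicity p b := emultiplicity_pow hp
  have hcmb : emultiplicity p (c * m * b) =
      emultiplicity p c + (2 * e - 1 : ℕ) + emultiplicity p b := by
    rw [emultiplicity_mul hp, emultiplicity_mul hp, hm]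
  have hc2nm : emultiplicity p (c ^ 2 * n * m) = 2 * emultiplicity p c + (2 * e - 1 : ℕ) := by
    rw [emultiplicity_mul hp, emultiplicity_mul hp, emultiplicity_pow hp, hm,
      emultiplicity_eq_zero.2 hpn, add_zero, Nat.cast_ofNat]
  have hm2t : ((2 * (2 * e - 1) : ℕ) : ℕ∞) ≤ emultiplicity p (m ^ 2 * t) := by
    rw [emultiplicity_mul hp, emultiplicity_pow hp, hm]
    push_cast
    exact le_self_add
  suffices ((2 * e - 1 : ℕ) : ℕ∞) ≤ emultiplicity p b ∧ (e : ℕ∞) ≤ emultiplicity p c from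
    ⟨pow_dvd_of_le_emultiplicity this.1, pow_dvd_of_le_emultiplicity this.2⟩
  rw [← h] at hm2t
  by_cases hne : emultiplicity p (b ^ 2) = emultiplicity p (c ^ 2 * n * m)
  · -- `2B` is even and `2C + (2e - 1)` is odd, so this forces `B = C = ⊤`
    rw [hb2, hc2nm] at hne
    generalize emultiplicity p b = B, emultiplicity p c = C at hne ⊢
    constructor <;> enat_to_nat <;> omega
  · have hlt : min (emultiplicity p (b ^ 2)) (emultiplicity p (c ^ 2 * n * m)) <
        emultiplicity p (c * m * b) := by
      rw [min_lt_iff, hb2, hc2nm, hcmb]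
      rw [hb2, hc2nm] at hne
      generalize emultiplicity p b = B, emultiplicity p c = C at hne ⊢
      clear * - hne he
      enat_to_nat <;> first
        | omega
        | simp_all only [add_top, ENat.natCast_lt_top, or_true, true_or, not_true_eq_false]
    rw [emultiplicity_add_add_eq_min hne hlt, le_min_iff, hb2, hc2nm] at hm2t
    generalize emultiplicity p b = B, emultiplicity p c = C at hm2t ⊢
    constructor <;> enat_to_nat <;> omega

section

variable {R ι : Type*} [CommRing R] [IsDomain R] [Fintype ι] {q : ι → R}

theorem prod_pow_ne_zero (hq : ∀ i, Prime (q i)) (k : ι → ℕ) : ∏ i, q i ^ k i ≠ 0 :=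
  Finset.prod_ne_zero_iff.mpr fun i _ => pow_ne_zero _ (hq i).ne_zero

theorem emultiplicity_prod_pow_of_pairwise (hq : ∀ i, Prime (q i))
    (hcop : Pairwise fun i j => IsCoprime (q i) (q j)) (k : ι → ℕ) (i : ι) :
    emultiplicity (q i) (∏ j, q j ^ k j) = k i := by
  classical
  rw [Finset.emultiplicity_prod (hq i), Finset.sum_eq_single i,
    emultiplicity_pow_self_of_prime (hq i)]
  · intro j _ hji
    rw [emultiplicity_pow (hq i), emultiplicity_eq_zero.2, mul_zero]
    exact fun hdvd => (hq i).not_isUnit ((hcop hji.symm).isUnit_of_dvd' dvd_rfl hdvd)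
  · simp

theorem prod_pow_dvd_and_prod_pow_dvd_of_sq_add_mul_add_eq (hq : ∀ i, Prime (q i))
    (hcop : Pairwise fun i j => IsCoprime (q i) (q j)) {e : ι → ℕ} (he : ∀ i, 1 ≤ e i)
    {m n b c t : R} (hm : m = ∏ i, q i ^ (2 * e i - 1)) (hnm : IsCoprime n m)
    (h : b ^ 2 + c * m * b + c ^ 2 * n * m = m ^ 2 * t) :
    m ∣ b ∧ ∏ i, q i ^ e i ∣ c := by
  have hpowcop (k : ι → ℕ) : Pairwise fun i j => IsCoprime (q i ^ k i) (q j ^ k j) :=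
    fun i j hij => (hcop hij).pow
  have hlocal (i : ι) : q i ^ (2 * e i - 1) ∣ b ∧ q i ^ e i ∣ c := by
    have hqm : q i ∣ m := hm ▸ (dvd_pow_self _ (by have := he i; omega)).trans
      (Finset.dvd_prod_of_mem _ (Finset.mem_univ i))
    refine pow_dvd_and_pow_dvd_of_sq_add_mul_add_eq (hq i) ?_ (he i) ?_ h
    · exact fun hqn => (hq i).not_isUnit (hnm.isUnit_of_dvd' hqn hqm)
    · rw [hm, emultiplicity_prod_pow_of_pairwise hq hcop]
  exact ⟨hm ▸ Fintype.prod_dvd_of_coprime (hpowcop _) fun i => (hlocal i).1,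
    Fintype.prod_dvd_of_coprime (hpowcop _) fun i => (hlocal i).2⟩

end

theorem prod_pow_sq_eq_prod_mul_prod_pow {M ι : Type*} [CommMonoid M] [Fintype ι] (q : ι → M)
    {e : ι → ℕ} (he : ∀ i, 1 ≤ e i) :
    (∏ i, q i ^ e i) ^ 2 = (∏ i, q i) * ∏ i, q i ^ (2 * e i - 1) := by
  rw [← Finset.prod_pow, ← Finset.prod_mul_distrib]
  refine Finset.prod_congr rfl fun i _ => ?_
  rw [← pow_mul, ← pow_succ']
  congr 1
  have := he i
  omega

theorem isIntegral_of_sq_add_mul_add_eq_zero {R S : Type*} [CommRing R] [Ring S] [Algebra R S]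
    {x : S} {s t : R} (h : x ^ 2 + algebraMap R S s * x + algebraMap R S t = 0) :
    IsIntegral R x := by
  refine ⟨X ^ 2 + C s * X + C t, ?_, ?_⟩
  · rw [add_assoc]
    exact monic_X_pow_add (by compute_degree!)
  · simpa [eval₂_add, Algebra.smul_def] using h

theorem CharTwo.eq_or_eq_add_of_sq_add_mul_add_eq_zero {R : Type*} [CommRing R] [IsDomain R]
    [CharP R 2] {d N x y : R} (hx : x ^ 2 + d * x + N = 0) (hy : y ^ 2 + d * y + N = 0) :
    y = x ∨ y = x + d := by
  have h2 : (2 : R) = 0 := CharTwo.two_eq_zero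
  have : (y + x) * (y + x + d) = 0 := by linear_combination hy + hx + (x * y - N) * h2
  rcases mul_eq_zero.mp this with h | h
  · exact Or.inl (by linear_combination h - x * h2)
  · exact Or.inr (by linear_combination h - (x + d) * h2)

theorem mem_adjoin_of_sq_add_self_eq {F K : Type*} [Field F] [Field K] [CharP K 2] [Algebra F K]
    {α x : K} {d N r : F} (hd : d ≠ 0)
    (hα : α ^ 2 + algebraMap F K d * α + algebraMap F K N = 0)
    (hx : x ^ 2 + x = algebraMap F K r) (hr : d ^ 2 * r = N) :
    x ∈ Algebra.adjoin F {α} := by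
  have hy : (algebraMap F K d * x) ^ 2 + algebraMap F K d * (algebraMap F K d * x)
      + algebraMap F K N = 0 := by
    rw [← hr, map_mul, map_pow, ← hx]
    linear_combination (algebraMap F K d ^ 2 * (x ^ 2 + x)) * (CharTwo.two_eq_zero : (2 : K) = 0)
  have hx' : x = algebraMap F K d⁻¹ * (algebraMap F K d * x) := by
    rw [map_inv₀, inv_mul_cancel_left₀ (by simpa using hd)]
  rw [hx']
  refine Subalgebra.mul_mem _ (Subalgebra.algebraMap_mem _ _) ?_
  rcases CharTwo.eq_or_eq_add_of_sq_add_mul_add_eq_zero hα hy with h | h <;> rw [h]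
  · exact Algebra.self_mem_adjoin_singleton F α
  · exact Subalgebra.add_mem _ (Algebra.self_mem_adjoin_singleton F α)
      (Subalgebra.algebraMap_mem _ _)

theorem exists_eq_add_mul_of_mem_adjoin {R S : Type*} [CommRing R] [CommRing S] [Algebra R S]
    {α : S} {d N : R} (hα : α ^ 2 + algebraMap R S d * α + algebraMap R S N = 0) {w : S}
    (hw : w ∈ Algebra.adjoin R {α}) :
    ∃ a b : R, w = algebraMap R S a + algebraMap R S b * α := by
  induction hw using Algebra.adjoin_induction with
  | mem y hy =>
    rw [Set.mem_singleton_iff.mp hy]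
    exact ⟨0, 1, by simp⟩
  | algebraMap r => exact ⟨r, 0, by simp⟩
  | add _ _ _ _ h₁ h₂ =>
    obtain ⟨a₁, b₁, rfl⟩ := h₁
    obtain ⟨a₂, b₂, rfl⟩ := h₂
    exact ⟨a₁ + a₂, b₁ + b₂, by simp only [map_add]; ring⟩
  | mul _ _ _ _ h₁ h₂ =>
    obtain ⟨a₁, b₁, rfl⟩ := h₁
    obtain ⟨a₂, b₂, rfl⟩ := h₂
    refine ⟨a₁ * a₂ - b₁ * b₂ * N, a₁ * b₂ + b₁ * a₂ - b₁ * b₂ * d, ?_⟩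
    simp only [map_add, map_sub, map_mul]
    linear_combination (algebraMap R S b₁ * algebraMap R S b₂) * hα

section IntegrallyClosed

variable {A F K : Type*} [CommRing A] [IsDomain A] [IsIntegrallyClosed A] [Field F] [Algebra A F]
  [IsFractionRing A F] [Field K] [Algebra F K] [Algebra A K] [IsScalarTower A F K]

theorem mem_range_of_isIntegral_of_sq_add_mul_add_eq_zero {z : K} (hz : IsIntegral A z)
    (hzF : z ∉ (algebraMap F K).range) {s t : F}
    (h : z ^ 2 + algebraMap F K s * z + algebraMap F K t = 0) :
    s ∈ (algebraMap A F).range ∧ t ∈ (algebraMap A F).range := by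
  have hP : (X ^ 2 + C s * X + C t).Monic := by
    rw [add_assoc]
    exact monic_X_pow_add (by compute_degree!)
  have hmin : minpoly F z = X ^ 2 + C s * X + C t := by
    refine (eq_of_monic_of_dvd_of_natDegree_le (minpoly.monic hz.tower_top) hP
      (minpoly.dvd F z (by simpa [Algebra.smul_def] using h)) ?_).symm
    have hdeg : (X ^ 2 + C s * X + C t : F[X]).natDegree = 2 := by compute_degree!
    exact hdeg.le.trans ((minpoly.two_le_natDegree_iff hz.tower_top).mpr hzF)
  rw [minpoly.isIntegrallyClosed_eq_field_fractions' F hz] at hmin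
  constructor
  · exact ⟨(minpoly A z).coeff 1, by simpa using congrArg (coeff · 1) hmin⟩
  · exact ⟨(minpoly A z).coeff 0, by simpa using congrArg (coeff · 0) hmin⟩

theorem integralClosure_eq_adjoin_of_sq_add_mul_add_eq_zero [CharP K 2] {α : K} {d N : A}
    (hα : α ^ 2 + algebraMap A K d * α + algebraMap A K N = 0)
    (hgen : Algebra.adjoin F {α} = ⊤) (hαF : α ∉ (algebraMap F K).range)
    (hcoord : ∀ a b : F, b * algebraMap A F d ∈ (algebraMap A F).range →
      a ^ 2 + a * b * algebraMap A F d + b ^ 2 * algebraMap A F N ∈ (algebraMap A F).range →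
      a ∈ (algebraMap A F).range ∧ b ∈ (algebraMap A F).range) :
    integralClosure A K = Algebra.adjoin A {α} := by
  refine le_antisymm (fun z hz => ?_)
    (Algebra.adjoin_le (Set.singleton_subset_iff.mpr (isIntegral_of_sq_add_mul_add_eq_zero hα)))
  rw [IsScalarTower.algebraMap_apply A F K, IsScalarTower.algebraMap_apply A F K] at hα
  obtain ⟨a, b, hzab⟩ := exists_eq_add_mul_of_mem_adjoin hα (hgen ▸ Algebra.mem_top (x := z))
  obtain ⟨⟨a, rfl⟩, ⟨b, rfl⟩⟩ : a ∈ (algebraMap A F).range ∧ b ∈ (algebraMap A F).range := by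
    by_cases hb : b = 0
    · rw [hb, map_zero, zero_mul, add_zero] at hzab
      refine ⟨IsIntegrallyClosed.isIntegral_iff.mp ?_, ⟨0, by rw [hb, map_zero]⟩⟩
      exact (isIntegral_algebraMap_iff (algebraMap F K).injective).mp (hzab ▸ hz)
    · have hzF : z ∉ (algebraMap F K).range := by
        rintro ⟨t, ht⟩
        refine hαF ⟨(t - a) / b, ?_⟩
        rw [map_div₀, map_sub, ht, hzab, add_sub_cancel_left,
          mul_div_cancel_left₀ _ (by simpa using hb)]
      have hz2 : z ^ 2 + algebraMap F K (b * algebraMap A F d) * z +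
          algebraMap F K (a ^ 2 + a * b * algebraMap A F d + b ^ 2 * algebraMap A F N) = 0 := by
        rw [hzab]
        simp only [map_add, map_mul, map_pow]
        linear_combination algebraMap F K b ^ 2 * hα + (algebraMap F K a ^ 2 +
          algebraMap F K a * algebraMap F K b * (algebraMap F K (algebraMap A F d) + α)) *
          (CharTwo.two_eq_zero : (2 : K) = 0)
      obtain ⟨hs, ht⟩ := mem_range_of_isIntegral_of_sq_add_mul_add_eq_zero hz hzF hz2
      exact hcoord a b hs ht
  rw [hzab, ← IsScalarTower.algebraMap_apply, ← IsScalarTower.algebraMap_apply]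
  exact Subalgebra.add_mem _ (Subalgebra.algebraMap_mem _ _)
    (Subalgebra.mul_mem _ (Subalgebra.algebraMap_mem _ _) (Algebra.self_mem_adjoin_singleton A α))

end IntegrallyClosed

section Arithmetic

variable {A F ι : Type*} [CommRing A] [IsDomain A] [IsIntegrallyClosed A] [Field F] [Algebra A F]
  [IsFractionRing A F] [Fintype ι] {q : ι → A}

theorem mem_range_of_mul_mem_range_of_sq_add_mul_add_mem_range (hq : ∀ i, Prime (q i))
    (hcop : Pairwise fun i j => IsCoprime (q i) (q j)) {e : ι → ℕ} (he : ∀ i, 1 ≤ e i)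
    {m n d N : A} (hm : m = ∏ i, q i ^ (2 * e i - 1)) (hnm : IsCoprime n m)
    (hd : Associated d (∏ i, q i ^ e i)) (hdN : d ^ 2 * n = N * m) {a b : F}
    (hbd : b * algebraMap A F d ∈ (algebraMap A F).range)
    (hab : a ^ 2 + a * b * algebraMap A F d + b ^ 2 * algebraMap A F N ∈ (algebraMap A F).range) :
    a ∈ (algebraMap A F).range ∧ b ∈ (algebraMap A F).range := by
  obtain ⟨c, hc⟩ := hbd
  obtain ⟨t, ht⟩ := hab
  have hinj : Function.Injective (algebraMap A F) := IsFractionRing.injective A F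
  have hm0 : algebraMap A F m ≠ 0 := (map_ne_zero_iff _ hinj).mpr (hm ▸ prod_pow_ne_zero hq _)
  have hd0 : algebraMap A F d ≠ 0 :=
    (map_ne_zero_iff _ hinj).mpr (hd.ne_zero_iff.mpr (prod_pow_ne_zero hq _))
  have key : (algebraMap A F m * a) ^ 2 + algebraMap A F (c * m) * (algebraMap A F m * a)
      + algebraMap A F (c ^ 2 * n * m) = algebraMap A F (m ^ 2 * t) := by
    have hdN' := congrArg (algebraMap A F) hdN
    simp only [map_mul, map_pow] at hdN' ⊢
    rw [hc, ht]
    linear_combination b ^ 2 * algebraMap A F m * hdN'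
  obtain ⟨b₀, hb₀⟩ := IsIntegrallyClosed.isIntegral_iff.mp
    (isIntegral_of_sq_add_mul_add_eq_zero (x := algebraMap A F m * a)
      (s := c * m) (t := c ^ 2 * n * m - m ^ 2 * t) (by rw [map_sub]; linear_combination key))
  have hA : b₀ ^ 2 + c * m * b₀ + c ^ 2 * n * m = m ^ 2 * t := hinj (by
    rw [← key, ← hb₀]
    simp only [map_add, map_mul, map_pow])
  obtain ⟨⟨k, hk⟩, hDc⟩ := prod_pow_dvd_and_prod_pow_dvd_of_sq_add_mul_add_eq hq hcop he hm hnm hA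
  obtain ⟨l, hl⟩ := hd.dvd.trans hDc
  refine ⟨⟨k, mul_left_cancel₀ hm0 ?_⟩, ⟨l, mul_left_cancel₀ hd0 ?_⟩⟩
  · rw [← map_mul, ← hk, hb₀]
  · rw [← map_mul, ← hl, hc, mul_comm]

end Arithmetic

theorem stmt14_general (Fq : Type*) [Field Fq] [CharP Fq 2]
    (n m : Polynomial Fq) (hnm : IsCoprime n m)
    (s' : ℕ) (qq : Fin s' → Polynomial Fq) (e : Fin s' → ℕ)
    (hq : ∀ i, Irreducible (qq i))
    (hqdist : ∀ i j, i ≠ j → IsCoprime (qq i) (qq j))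
    (he : ∀ i, 1 ≤ e i)
    (hm : m = ∏ i, qq i ^ (2 * e i - 1))
    (ε : Fq) (hε : ε ≠ 0)
    (K : Type*) [Field K] [Algebra (RatFunc Fq) K] [Algebra (Polynomial Fq) K]
    [IsScalarTower (Polynomial Fq) (RatFunc Fq) K]
    (hdim : Module.finrank (RatFunc Fq) K = 2)
    (x : K)
    (hx : x ^ 2 + x = algebraMap (RatFunc Fq) K
      (algebraMap (Polynomial Fq) (RatFunc Fq) n / algebraMap (Polynomial Fq) (RatFunc Fq) m))
    (hxgen : Algebra.adjoin (RatFunc Fq) ({x} : Set K) = ⊤)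
    (α : K)
    (hα : α ^ 2 +
        algebraMap (Polynomial Fq) K (Polynomial.C ε * ∏ i, qq i ^ e i) * α +
        algebraMap (Polynomial Fq) K (Polynomial.C (ε ^ 2) * (∏ i, qq i) * n) = 0) :
    Algebra.adjoin (RatFunc Fq) ({α} : Set K) = ⊤ ∧
    integralClosure (Polynomial Fq) K = Algebra.adjoin (Polynomial Fq) ({α} : Set K) := by
  have : CharP K 2 := charP_of_injective_algebraMap' (RatFunc Fq) 2
  have hprime (i : Fin s') : Prime (qq i) := (hq i).prime
  set d := C ε * ∏ i, qq i ^ e i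
  set N := C (ε ^ 2) * (∏ i, qq i) * n
  have hd : Associated d (∏ i, qq i ^ e i) := associated_unit_mul_left _ _ (isUnit_C.mpr hε.isUnit)
  have hdN : d ^ 2 * n = N * m := by
    rw [mul_pow, prod_pow_sq_eq_prod_mul_prod_pow qq he, ← hm, ← C_pow]
    ring
  have hm0 := RatFunc.algebraMap_ne_zero (hm ▸ prod_pow_ne_zero hprime _)
  have hd0 := RatFunc.algebraMap_ne_zero (hd.ne_zero_iff.mpr (prod_pow_ne_zero hprime e))
  have hgen : Algebra.adjoin (RatFunc Fq) ({α} : Set K) = ⊤ := by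
    rw [eq_top_iff, ← hxgen, Algebra.adjoin_le_iff, Set.singleton_subset_iff]
    refine mem_adjoin_of_sq_add_self_eq (N := algebraMap _ (RatFunc Fq) N) hd0 ?_ hx ?_
    · simpa only [IsScalarTower.algebraMap_apply (Polynomial Fq) (RatFunc Fq) K] using hα
    · rw [mul_div_assoc', div_eq_iff hm0, ← map_pow, ← map_mul, ← map_mul, hdN]
  refine ⟨hgen, integralClosure_eq_adjoin_of_sq_add_mul_add_eq_zero hα hgen ?_
    fun a b => mem_range_of_mul_mem_range_of_sq_add_mul_add_mem_range hprime
      (fun i j => hqdist i j) he hm hnm hd hdN⟩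
  rintro ⟨t, rfl⟩
  rw [Algebra.adjoin_singleton_algebraMap, Subalgebra.bot_eq_top_iff_finrank_eq_one, hdim] at hgen
  omega

/-- Let `A = F_q[T]` with `q` even, and let `K` be the Artin–Schreier
quadratic extension of `F = F_q(T)` defined by `X² + X = n/m`, with `n, m` coprime and
`m = q₁^{2e₁−1}⋯q_s^{2e_s−1}` for distinct primes `qᵢ`, `eᵢ ≥ 1`.  Set
`D = q₁^{e₁}⋯q_s^{e_s}`, let `ε ∈ F_q^×`, and let `α ∈ K` be a root of
`f(X) = X² + εD·X + ε²q₁⋯q_s·n`.  Then `K = F(α)` and the integral closure of `A`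
in `K` is `A[α]`. -/
theorem stmt14 (Fq : Type*) [Field Fq] [Fintype Fq] [CharP Fq 2]
    (n m : Polynomial Fq) (hnm : IsCoprime n m)
    (s' : ℕ) (qq : Fin s' → Polynomial Fq) (e : Fin s' → ℕ)
    (hq : ∀ i, Irreducible (qq i))
    (hqdist : ∀ i j, i ≠ j → IsCoprime (qq i) (qq j))
    (he : ∀ i, 1 ≤ e i)
    (hm : m = ∏ i, qq i ^ (2 * e i - 1))
    (ε : Fq) (hε : ε ≠ 0)
    (K : Type*) [Field K] [Algebra (RatFunc Fq) K] [Algebra (Polynomial Fq) K]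
    [IsScalarTower (Polynomial Fq) (RatFunc Fq) K]
    (hdim : Module.finrank (RatFunc Fq) K = 2)
    (x : K)
    (hx : x ^ 2 + x = algebraMap (RatFunc Fq) K
      (algebraMap (Polynomial Fq) (RatFunc Fq) n / algebraMap (Polynomial Fq) (RatFunc Fq) m))
    (hxgen : Algebra.adjoin (RatFunc Fq) ({x} : Set K) = ⊤)
    (α : K)
    (hα : α ^ 2 +
        algebraMap (Polynomial Fq) K (Polynomial.C ε * ∏ i, qq i ^ e i) * α +
        algebraMap (Polynomial Fq) K (Polynomial.C (ε ^ 2) * (∏ i, qq i) * n) = 0) :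
    Algebra.adjoin (RatFunc Fq) ({α} : Set K) = ⊤ ∧
    integralClosure (Polynomial Fq) K = Algebra.adjoin (Polynomial Fq) ({α} : Set K) :=
  stmt14_general Fq n m hnm s' qq e hq hqdist he hm ε hε K hdim x hx hxgen α hα
end
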